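/- Every power of a cycle C_n^k with n ≥ 2k + 2 admits a 3-colouring of its vertices in which no three vertices of the same colour induce a path P_3. -/

import Mathlib

open SimpleGraph

/-- The `k`-th power of a path on `n` vertices: `v_i ~ v_j` iff `0 < |i - j| ≤ k`. -/
def pathPower (n k : ℕ) : SimpleGraph (Fin n) :=
  SimpleGraph.fromRel (fun i j => i.val ≤ j.val ∧ j.val ≤ i.val + k)

/-- The cyclic distance between two vertices of `ZMod n`. -/
def cdist (n : ℕ) (i j : ZMod n) : ℕ := min (i - j).val (j - i).val

/-- The `k`-th power of a cycle on `n` vertices: `v_i ~ v_j` iff the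
cyclic distance between `i` and `j` is between `1` and `k`. -/
def cyclePower (n k : ℕ) : SimpleGraph (ZMod n) :=
  SimpleGraph.fromRel (fun i j => cdist n i j ≤ k)

/-- `S` induces a complete bipartite subgraph of `G`. -/
def IsCompleteBipartiteSet {V : Type*} (G : SimpleGraph V) (S : Set V) : Prop :=
  ∃ A B : Set V, A ∪ B = S ∧ Disjoint A B ∧
    (∀ a ∈ A, ∀ b ∈ B, G.Adj a b) ∧
    (∀ a ∈ A, ∀ a' ∈ A, ¬ G.Adj a a') ∧
    (∀ b ∈ B, ∀ b' ∈ B, ¬ G.Adj b b')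

/-- A biclique: a maximal set of vertices inducing a complete bipartite
subgraph with at least one edge. -/
def IsBiclique {V : Type*} (G : SimpleGraph V) (S : Set V) : Prop :=
  IsCompleteBipartiteSet G S ∧ (∃ u ∈ S, ∃ v ∈ S, G.Adj u v) ∧
  ∀ T : Set V, S ⊆ T → IsCompleteBipartiteSet G T → T = S

/-- A set is monochromatic under a colouring. -/
def Monochromatic {V α : Type*} (c : V → α) (S : Set V) : Prop :=
  ∃ a, ∀ v ∈ S, c v = a

/-- `G` admits a biclique-colouring with `m` colours. -/
def BicliqueColorable {V : Type*} (G : SimpleGraph V) (m : ℕ) : Prop :=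
  ∃ c : V → Fin m, ∀ S : Set V, IsBiclique G S → ¬ Monochromatic c S

/-- The biclique-chromatic number. -/
noncomputable def bicliqueChromaticNumber {V : Type*} (G : SimpleGraph V) : ℕ :=
  sInf {m | BicliqueColorable G m}

/-- `a`, `b`, `c` induce a path on three vertices (with middle vertex `b`). -/
def IsInducedP3 {V : Type*} (G : SimpleGraph V) (a b c : V) : Prop :=
  a ≠ b ∧ b ≠ c ∧ a ≠ c ∧ G.Adj a b ∧ G.Adj b c ∧ ¬ G.Adj a c

/-- `a`, `b`, `c`, `d` induce a four-cycle (in this cyclic order). -/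
def IsInducedC4 {V : Type*} (G : SimpleGraph V) (a b c d : V) : Prop :=
  a ≠ b ∧ a ≠ c ∧ a ≠ d ∧ b ≠ c ∧ b ≠ d ∧ c ≠ d ∧
  G.Adj a b ∧ G.Adj b c ∧ G.Adj c d ∧ G.Adj d a ∧ ¬ G.Adj a c ∧ ¬ G.Adj b d

/-! If the vertices are partitioned into cliques so that adjacent vertices of the same colour
always lie in the same clique, each colour class induces a disjoint union of cliques, which
contains no induced `P_3`. For `C_n^k` the cliques are blocks of `k + 1` cyclically consecutive vertices, coloured so
that two blocks of the same colour are at cyclic distance more than `k`: alternate two colours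
and use the third one near the wrap-around, which works once there are two full blocks, i.e.
`n ≥ 2k + 2`. -/

theorem IsInducedP3.not_monochromatic_of_cliques {V α β : Type*} {G : SimpleGraph V}
    {c : V → α} (b : V → β) (hclique : ∀ x y, x ≠ y → b x = b y → G.Adj x y)
    (hsep : ∀ x y, G.Adj x y → c x = c y → b x = b y) {x y z : V}
    (hP3 : IsInducedP3 G x y z) : ¬ (c x = c y ∧ c y = c z) := by
  rintro ⟨hcxy, hcyz⟩
  obtain ⟨-, -, hxz, hxy, hyz, hnxz⟩ := hP3
  exact hnxz (hclique x z hxz ((hsep x y hxy hcxy).trans (hsep y z hyz hcyz)))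

theorem cdist_comm (n : ℕ) (x y : ZMod n) : cdist n x y = cdist n y x := min_comm _ _

theorem cdist_eq_of_val_le {n : ℕ} [NeZero n] {x y : ZMod n} (h : x.val ≤ y.val) :
    cdist n x y = min (y.val - x.val) (n - (y.val - x.val)) := by
  have hy := ZMod.val_lt y
  rw [cdist, ← neg_sub, ZMod.neg_val', ZMod.val_sub h, min_comm]
  rcases Nat.eq_zero_or_pos (y.val - x.val) with h0 | hpos
  · simp [h0]
  · rw [Nat.mod_eq_of_lt (by omega)]

theorem cyclePower_adj_iff {n k : ℕ} {x y : ZMod n} :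
    (cyclePower n k).Adj x y ↔ x ≠ y ∧ cdist n x y ≤ k := by
  simp [cyclePower, cdist_comm n y x]

theorem cdist_le_of_val_div_eq {n k : ℕ} [NeZero n] {x y : ZMod n}
    (h : x.val / (k + 1) = y.val / (k + 1)) : cdist n x y ≤ k := by
  wlog hle : x.val ≤ y.val generalizing x y
  · exact cdist_comm n x y ▸ this h.symm (by omega)
  rw [cdist_eq_of_val_le hle]
  have hx := Nat.div_add_mod x.val (k + 1)
  have hy := Nat.div_add_mod y.val (k + 1)
  have := Nat.mod_lt y.val (by omega : 0 < k + 1)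
  rw [h] at hx
  exact min_le_of_left_le (by omega)

/-- Colour of the `j`-th block when `ℕ` is cut into blocks of length `k + 1` and
`n = q (k + 1) + r`: the blocks `0, …, q - 1` are full and, if `r ≠ 0`, block `q` is the
partial block closing the cycle. The colours alternate `0, 1, 0, …`, and the last one or two
blocks are recoloured so that no two blocks of the same colour are cyclically consecutive. -/
def blockColour (q r j : ℕ) : ℕ :=
  if r = 0 then
    if q % 2 = 1 ∧ j = q - 1 then 2 else j % 2
  else if q % 2 = 0 then
    if j = q then 2 else j % 2
  else
    if j = q then 1 else if j = q - 1 then 2 else j % 2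

theorem blockColour_lt (q r j : ℕ) : blockColour q r j < 3 := by
  unfold blockColour; split_ifs <;> omega

/-- Blocks `i < j` of the same colour have a full block between them on both sides of the
cycle. -/
theorem blockColour_eq_separated {q r i j : ℕ} (hq : 2 ≤ q) (hij : i < j)
    (hj : j < q ∨ (j = q ∧ r ≠ 0)) (hcol : blockColour q r i = blockColour q r j) :
    i + 2 ≤ j ∧ (1 ≤ i ∨ j + 2 ≤ q) := by
  unfold blockColour at hcol; split_ifs at hcol <;> omega

theorem separated_of_blockColour_eq {n k u v : ℕ} (hn : 2 * k + 2 ≤ n) (huv : u < v)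
    (hv : v < n) (hne : u / (k + 1) ≠ v / (k + 1))
    (hcol : blockColour (n / (k + 1)) (n % (k + 1)) (u / (k + 1)) =
      blockColour (n / (k + 1)) (n % (k + 1)) (v / (k + 1))) :
    k + 1 ≤ v - u ∧ k + 1 ≤ n - (v - u) := by
  set K := k + 1
  have hK : 0 < K := k.succ_pos
  have hu := Nat.div_add_mod u K
  have hv_div := Nat.div_add_mod v K
  have := Nat.div_add_mod n K
  have := Nat.mod_lt u hK
  have := Nat.mod_lt v hK
  have hq : 2 ≤ n / K := (Nat.le_div_iff_mul_le hK).mpr (by omega)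
  have hij : u / K < v / K := (Nat.div_le_div_right huv.le).lt_of_ne hne
  have hj : v / K < n / K ∨ (v / K = n / K ∧ n % K ≠ 0) := by
    rcases (Nat.div_le_div_right (c := K) hv.le).lt_or_eq with hlt | heq
    · exact .inl hlt
    · refine .inr ⟨heq, fun hr => ?_⟩
      rw [heq] at hv_div
      omega
  obtain ⟨hgap, hwrap⟩ := blockColour_eq_separated hq hij hj hcol
  have := Nat.mul_le_mul_left K hgap
  refine ⟨by rw [Nat.mul_add] at this; omega, ?_⟩
  rcases hwrap with hi | hj'
  · have := Nat.mul_le_mul_left K hi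
    omega
  · have := Nat.mul_le_mul_left K hj'
    rw [Nat.mul_add] at this
    omega

def cycleBlockColouring (n k : ℕ) (x : ZMod n) : Fin 3 :=
  ⟨blockColour (n / (k + 1)) (n % (k + 1)) (x.val / (k + 1)), blockColour_lt _ _ _⟩

theorem val_div_eq_of_adj_of_cycleBlockColouring_eq {n k : ℕ} [NeZero n] (hn : 2 * k + 2 ≤ n)
    {x y : ZMod n} (hadj : (cyclePower n k).Adj x y)
    (hcol : cycleBlockColouring n k x = cycleBlockColouring n k y) :
    x.val / (k + 1) = y.val / (k + 1) := by
  wlog hle : x.val ≤ y.val generalizing x y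
  · exact (this hadj.symm hcol.symm (by omega)).symm
  by_contra hne
  have hlt : x.val < y.val := hle.lt_of_ne fun h => hne (congrArg (· / (k + 1)) h)
  have hd := (cyclePower_adj_iff.mp hadj).2
  have hfar :=
    separated_of_blockColour_eq hn hlt (ZMod.val_lt y) hne (Fin.val_eq_of_eq hcol)
  rw [cdist_eq_of_val_le hle] at hd
  omega

/-- `C_n^k` with `n ≥ 2k + 2` admits a 3-colouring in which no three
same-coloured vertices induce a `P_3`. -/
theorem stmt_10 (n k : ℕ) (h : 2 * k + 2 ≤ n) :
    ∃ c : ZMod n → Fin 3, ∀ x y z : ZMod n,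
      IsInducedP3 (cyclePower n k) x y z → ¬ (c x = c y ∧ c y = c z) := by
  have : NeZero n := ⟨by omega⟩
  refine ⟨cycleBlockColouring n k, fun x y z hP3 => hP3.not_monochromatic_of_cliques
    (fun v => v.val / (k + 1)) (fun u v huv hb => ?_)
    (fun u v hadj hcol => val_div_eq_of_adj_of_cycleBlockColouring_eq h hadj hcol)⟩
  exact cyclePower_adj_iff.mpr ⟨huv, cdist_le_of_val_div_eq hb⟩
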